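/- For every 0 ≤ i ≤ n−4 one has κ²·∂_i y = y·subst Q (θH̃_i) in A⟦t⟧. (This is the formal version, with the normalizing constant κ² made explicit, of the paper's Lemma: ∂_{i,T}F(ρ,Q) = F(ρ,Q)·H̃_i′(ρ,Q), where ∂_{i,T}F is the composition of ∂y/∂ρ_i with T.) -/

import Mathlib

noncomputable section

open PowerSeries

/-- The ring of accessory parameters: polynomials in `ρ_0, …, ρ_{n-4}` over `ℂ`. -/
abbrev AccRing (n : ℕ) : Type := MvPolynomial (Fin (n - 3)) ℂ

/-- Coefficientwise partial derivative of a power series with respect to the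
accessory parameter `ρ_i`. -/
noncomputable def pd {n : ℕ} (i : Fin (n - 3)) (u : PowerSeries (AccRing n)) :
    PowerSeries (AccRing n) :=
  PowerSeries.mk fun m => MvPolynomial.pderiv i (PowerSeries.coeff (R := AccRing n) m u)

/-- The polynomial `P = t·∏_{j=1}^{n-2}(t - α_j)`, viewed in `A⟦t⟧`. -/
noncomputable def Ppoly (n : ℕ) (α : Fin (n - 2) → ℂ) : PowerSeries (AccRing n) :=
  X * ∏ j, (X - C (R := AccRing n) (MvPolynomial.C (α j)))

/-- The polynomial `P̂ = P/t = ∏_{j=1}^{n-2}(t - α_j)`, viewed in `A⟦t⟧`. -/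
noncomputable def PhatPoly (n : ℕ) (α : Fin (n - 2) → ℂ) : PowerSeries (AccRing n) :=
  ∏ j, (X - C (R := AccRing n) (MvPolynomial.C (α j)))

/-- `κ = P̂(0) = (-1)^(n-2) ∏ α_j`. -/
noncomputable def kappa (n : ℕ) (α : Fin (n - 2) → ℂ) : ℂ :=
  (-1) ^ (n - 2) * ∏ j, α j

/-- `P1 = (1 - n/2)²·t^(n-3) - ∑_{i=0}^{n-4} ρ_i·t^i`, viewed in `A⟦t⟧`. -/
noncomputable def P1poly (n : ℕ) : PowerSeries (AccRing n) :=
  C (R := AccRing n) (MvPolynomial.C ((1 - (n : ℂ) / 2) ^ 2)) * X ^ (n - 3)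
    - ∑ i : Fin (n - 3), C (R := AccRing n) (MvPolynomial.X i) * X ^ (i : ℕ)

/-- The differential operator `L u = (P·u')' + P1·u`. -/
noncomputable def Lop (n : ℕ) (α : Fin (n - 2) → ℂ) (u : PowerSeries (AccRing n)) :
    PowerSeries (AccRing n) :=
  derivative (AccRing n) (Ppoly n α * derivative (AccRing n) u) + P1poly n * u

/-- Formal antiderivative with zero constant term. -/
noncomputable def integ {A : Type*} [CommRing A] [Algebra ℚ A] (u : PowerSeries A) :
    PowerSeries A :=
  PowerSeries.mk fun m => if m = 0 then 0 else ((m : ℚ)⁻¹) • PowerSeries.coeff (R := A) (m - 1) u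

/-- Formal substitution of the power series `S` (with zero constant term) into `G`. -/
noncomputable def substS {A : Type*} [CommSemiring A] (S G : PowerSeries A) : PowerSeries A :=
  PowerSeries.mk fun m =>
    ∑ j ∈ Finset.range (m + 1), PowerSeries.coeff (R := A) j G * PowerSeries.coeff (R := A) m (S ^ j)

/-- The operator `θ G = X·dG/dX`. -/
noncomputable def theta {A : Type*} [CommRing A] (G : PowerSeries A) : PowerSeries A :=
  PowerSeries.X * PowerSeries.derivative A G

/-- The formal Eichler integral: divide the `m`-th coefficient by `m³`. -/
noncomputable def eich {A : Type*} [CommRing A] [Algebra ℚ A] (H : PowerSeries A) :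
    PowerSeries A :=
  PowerSeries.mk fun m => (((m : ℚ) ^ 3)⁻¹) • PowerSeries.coeff (R := A) m H

/-- Formal exponential of a power series with zero constant term. -/
noncomputable def expS {A : Type*} [CommRing A] [Algebra ℚ A] (S : PowerSeries A) :
    PowerSeries A :=
  substS S (PowerSeries.exp A)

/-!
Two facts about `L` drive the proof. If `L y = 0` then `y·L(y F) = (P y² F')'`, and `L` is
injective on series without constant term: `t = 0` is a regular singular point with indicial
equation `r² = 0`, so the `t^m` coefficient of `L w` is `(m+1)² κ w_{m+1}` plus terms in lower
coefficients of `w`.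

By Abel's identity the Wronskian of `y` and `y log t + b` gives `P̂ y² + P (b' y - b y') = κ`,
which for `Q = t·exp(b/y)` reads `P y² Q' = κ Q`. With the chain rule this becomes
`P y² (G ∘ Q)' = κ (θG) ∘ Q` for every `G`; applied twice to `F = (θH̃) ∘ Q`, together with
`θ³H̃ = H` and `H ∘ Q = P tⁱ y⁴`, it yields `L(y F) = κ² tⁱ y`. Differentiating `L y = 0` in
`ρ_i` gives `L(∂_i y) = tⁱ y`, since `∂_i P1 = -tⁱ`. Hence `κ² ∂_i y - y F` is killed by `L`
and vanishes at `t = 0`, so it is zero.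
-/

section Substitution

variable {R : Type*} [CommRing R] {S : R⟦X⟧}

theorem coeff_pow_eq_zero_of_lt (hS : constantCoeff S = 0) {j m : ℕ} (h : m < j) :
    coeff m (S ^ j) = 0 := by
  obtain ⟨u, rfl⟩ := X_dvd_iff.mpr hS
  rw [mul_pow, coeff_X_pow_mul', if_neg (by omega)]

theorem substS_eq_subst (hS : constantCoeff S = 0) (G : R⟦X⟧) : substS S G = G.subst S := by
  ext m
  rw [substS, coeff_mk, coeff_subst' (HasSubst.of_constantCoeff_zero' hS),
    finsum_eq_sum_of_support_subset (s := Finset.range (m + 1))]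
  · simp only [smul_eq_mul]
  · intro d hd
    by_contra hdm
    simp only [Finset.coe_range, Set.mem_Iio, not_lt] at hdm
    exact hd (by simp only [coeff_pow_eq_zero_of_lt hS (show m < d by omega), smul_zero])

theorem derivative_X_mul_expS [Algebra ℚ R] (hS : constantCoeff S = 0) :
    d⁄dX R (X * expS S) = expS S * (1 + X * d⁄dX R S) := by
  rw [Derivation.leibniz, expS, substS_eq_subst hS,
    derivative_subst (HasSubst.of_constantCoeff_zero' hS), derivative_exp, derivative_X]
  simp only [smul_eq_mul]
  ring

end Substitution

section Theta

variable {R : Type*} [CommRing R]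

theorem coeff_theta (G : R⟦X⟧) (m : ℕ) : coeff m (theta G) = m * coeff m G := by
  cases m with
  | zero => simp [theta]
  | succ m => rw [theta, coeff_succ_X_mul, coeff_derivative]; push_cast; ring

theorem theta_theta_theta_eich [Algebra ℚ R] {H : R⟦X⟧} (hH : constantCoeff H = 0) :
    theta (theta (theta (eich H))) = H := by
  ext m
  rw [coeff_theta, coeff_theta, coeff_theta, eich, coeff_mk]
  rcases Nat.eq_zero_or_pos m with rfl | hm
  · rw [coeff_zero_eq_constantCoeff_apply, hH, Nat.cast_zero, zero_mul]
  · rw [← mul_assoc, ← mul_assoc, ← pow_three', ← map_natCast (algebraMap ℚ R), ← map_pow,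
      ← Algebra.smul_def, smul_smul, mul_inv_cancel₀ (by positivity), one_smul]

theorem subst_theta {Q : R⟦X⟧} (hQ : constantCoeff Q = 0) (G : R⟦X⟧) :
    (theta G).subst Q = Q * (d⁄dX R G).subst Q := by
  have hQ' := HasSubst.of_constantCoeff_zero' hQ
  rw [theta, subst_mul hQ', subst_X hQ']

end Theta

section PartialDerivative

variable {n : ℕ} (i : Fin (n - 3))

theorem coeff_pd (u : (AccRing n)⟦X⟧) (m : ℕ) :
    coeff m (pd i u) = MvPolynomial.pderiv i (coeff m u) :=
  coeff_mk _ _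

theorem constantCoeff_pd (u : (AccRing n)⟦X⟧) :
    constantCoeff (pd i u) = MvPolynomial.pderiv i (constantCoeff u) := by
  rw [← coeff_zero_eq_constantCoeff_apply, coeff_pd, coeff_zero_eq_constantCoeff_apply]

theorem pd_zero : pd i (0 : (AccRing n)⟦X⟧) = 0 := by
  ext m : 1
  rw [coeff_pd, map_zero, map_zero]

theorem pd_add (u v : (AccRing n)⟦X⟧) : pd i (u + v) = pd i u + pd i v := by
  ext m
  simp only [coeff_pd, map_add]

theorem pd_mul (u v : (AccRing n)⟦X⟧) : pd i (u * v) = pd i u * v + u * pd i v := by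
  ext m
  simp only [coeff_pd, map_add, coeff_mul, map_sum, MvPolynomial.pderiv_mul,
    Finset.sum_add_distrib]

theorem pd_derivative (u : (AccRing n)⟦X⟧) : pd i (d⁄dX _ u) = d⁄dX _ (pd i u) := by
  ext m
  rw [coeff_pd, coeff_derivative, coeff_derivative, coeff_pd, ← Nat.cast_succ,
    ← map_natCast MvPolynomial.C, MvPolynomial.pderiv_mul, MvPolynomial.pderiv_C, mul_zero,
    add_zero]

theorem pd_map_C (v : ℂ⟦X⟧) : pd i (map (MvPolynomial.C : ℂ →+* AccRing n) v) = 0 := by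
  ext m
  rw [coeff_pd, coeff_map, MvPolynomial.pderiv_C, map_zero]

theorem pd_Ppoly (α : Fin (n - 2) → ℂ) : pd i (Ppoly n α) = 0 := by
  convert pd_map_C i (X * ∏ j, (X - C (α j)))
  simp only [Ppoly, map_mul, map_X, map_prod, map_sub, map_C]

theorem pd_P1poly : pd i (P1poly n) = -X ^ (i : ℕ) := by
  classical
  ext m
  simp only [coeff_pd, P1poly, map_sub, map_sum, coeff_C_mul, coeff_X_pow, map_neg,
    mul_ite, mul_one, mul_zero, apply_ite (MvPolynomial.pderiv i), MvPolynomial.pderiv_C,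
    MvPolynomial.pderiv_X, map_zero, ite_self, zero_sub]
  rw [Finset.sum_eq_single i (fun k _ hk => by simp [hk])
    (fun h => absurd (Finset.mem_univ i) h)]
  simp

theorem pd_Lop (α : Fin (n - 2) → ℂ) (u : (AccRing n)⟦X⟧) :
    pd i (Lop n α u) = Lop n α (pd i u) - X ^ (i : ℕ) * u := by
  simp only [Lop, pd_add, pd_mul, pd_derivative, pd_Ppoly, pd_P1poly, zero_mul, zero_add]
  ring

end PartialDerivative

section SturmLiouville

variable {R : Type*} [CommRing R]

def sturmLiouville (P P1 u : R⟦X⟧) : R⟦X⟧ := d⁄dX R (P * d⁄dX R u) + P1 * u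

theorem Lop_eq_sturmLiouville {n : ℕ} (α : Fin (n - 2) → ℂ) :
    Lop n α = sturmLiouville (Ppoly n α) (P1poly n) := rfl

variable {P P1 : R⟦X⟧}

theorem sturmLiouville_mul_sub {c : R⟦X⟧} (hc : d⁄dX R c = 0) (u v : R⟦X⟧) :
    sturmLiouville P P1 (c * u - v) = c * sturmLiouville P P1 u - sturmLiouville P P1 v := by
  simp only [sturmLiouville, map_add, map_sub, map_zero, Derivation.leibniz, smul_eq_mul, hc]
  ring

theorem mul_sturmLiouville_mul {y : R⟦X⟧} (hy : sturmLiouville P P1 y = 0) (F : R⟦X⟧) :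
    y * sturmLiouville P P1 (y * F) = d⁄dX R (P * y ^ 2 * d⁄dX R F) := by
  simp only [sturmLiouville, map_add, Derivation.leibniz, Derivation.leibniz_pow, smul_eq_mul]
    at hy ⊢
  linear_combination (y * F) * hy

theorem derivative_wronskian {y b f : R⟦X⟧} (hy : sturmLiouville P P1 y = 0)
    (hb : sturmLiouville P P1 b + f = 0) :
    d⁄dX R (P * (d⁄dX R b * y - b * d⁄dX R y)) = -(f * y) := by
  simp only [sturmLiouville, Derivation.leibniz, smul_eq_mul, map_sub] at hy hb ⊢
  linear_combination y * hb - b * hy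

theorem eq_zero_of_sturmLiouville_eq_zero [IsDomain R] [CharZero R] {w : R⟦X⟧}
    (hP0 : constantCoeff P = 0) (hP1 : coeff 1 P ≠ 0) (hw : sturmLiouville P P1 w = 0)
    (hw0 : constantCoeff w = 0) : w = 0 := by
  obtain ⟨Ph, rfl⟩ := X_dvd_iff.mpr hP0
  have hPh : constantCoeff Ph ≠ 0 := by
    rwa [← coeff_zero_eq_constantCoeff_apply, ← coeff_succ_X_mul]
  have hdvd : ∀ m : ℕ, X ^ (m + 1) ∣ w := by
    intro m
    induction m with
    | zero => simpa using X_dvd_iff.mpr hw0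
    | succ m ih =>
      obtain ⟨v, rfl⟩ := ih
      have hD : d⁄dX R (X ^ (m + 1) * v) = X ^ m * ((m + 1 : R⟦X⟧) * v + X * d⁄dX R v) := by
        rw [Derivation.leibniz, derivative_pow, derivative_X]
        simp only [smul_eq_mul, Nat.cast_add, Nat.cast_one, add_tsub_cancel_right]
        ring
      have hcoeff := congrArg (coeff m) hw
      rw [sturmLiouville, hD, map_add, coeff_derivative, map_zero,
        show X * Ph * (X ^ m * ((m + 1 : R⟦X⟧) * v + X * d⁄dX R v))
          = X ^ (m + 1) * (Ph * ((m + 1 : R⟦X⟧) * v + X * d⁄dX R v)) by ring,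
        mul_left_comm P1, coeff_X_pow_mul', coeff_X_pow_mul', if_pos le_rfl,
        if_neg (by omega), add_zero, Nat.sub_self, coeff_zero_eq_constantCoeff_apply] at hcoeff
      simp only [map_mul, map_add, map_natCast, map_one, constantCoeff_X, zero_mul,
        add_zero] at hcoeff
      have hv : constantCoeff v = 0 := by
        have h1 : ((m : R) + 1) ≠ 0 := by exact_mod_cast Nat.succ_ne_zero m
        simpa [h1, hPh] using hcoeff
      obtain ⟨u, rfl⟩ := X_dvd_iff.mpr hv
      exact ⟨u, by ring⟩
  ext m
  rw [map_zero]
  exact X_pow_dvd_iff.mp (hdvd m) m (Nat.lt_succ_self m)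

end SturmLiouville

section Uniformizer

variable {R : Type*} [CommRing R]

theorem sq_mul_derivative_mul_inv {y yinv : R⟦X⟧} (hyinv : y * yinv = 1) (b : R⟦X⟧) :
    y ^ 2 * d⁄dX R (b * yinv) = d⁄dX R b * y - b * d⁄dX R y := by
  have h := congrArg (d⁄dX R) hyinv
  rw [Derivation.leibniz, smul_eq_mul, smul_eq_mul, Derivation.map_one_eq_zero] at h
  rw [Derivation.leibniz, smul_eq_mul, smul_eq_mul]
  linear_combination (b * y) * h + (y * d⁄dX R b - b * d⁄dX R y) * hyinv

theorem wronskian_eq_C [IsAddTorsionFree R] {Ph P1 y b : R⟦X⟧}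
    (hy : sturmLiouville (X * Ph) P1 y = 0)
    (hb : sturmLiouville (X * Ph) P1 b + 2 * Ph * d⁄dX R y + d⁄dX R Ph * y = 0)
    (hy1 : constantCoeff y = 1) :
    Ph * y ^ 2 + X * Ph * (d⁄dX R b * y - b * d⁄dX R y) = C (constantCoeff Ph) := by
  apply derivative.ext
  · rw [derivative_C, map_add, derivative_wronskian hy (add_assoc _ _ (d⁄dX R Ph * y) ▸ hb)]
    simp only [Derivation.leibniz, Derivation.leibniz_pow, smul_eq_mul]
    ring
  · simp [hy1]

theorem X_mul_mul_sq_mul_derivative_X_mul_expS [Algebra ℚ R] {Ph y yinv b c : R⟦X⟧}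
    (hyinv : y * yinv = 1) (hb0 : constantCoeff b = 0)
    (hW : Ph * y ^ 2 + X * Ph * (d⁄dX R b * y - b * d⁄dX R y) = c) :
    X * Ph * y ^ 2 * d⁄dX R (X * expS (b * yinv)) = c * (X * expS (b * yinv)) := by
  rw [derivative_X_mul_expS (by rw [map_mul, hb0, zero_mul])]
  linear_combination (X * expS (b * yinv)) * hW
    + (X ^ 2 * Ph * expS (b * yinv)) * sq_mul_derivative_mul_inv hyinv b

theorem mul_sq_mul_derivative_subst {P y Q c : R⟦X⟧} (hQ : constantCoeff Q = 0)
    (hPQ : P * y ^ 2 * d⁄dX R Q = c * Q) (G : R⟦X⟧) :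
    P * y ^ 2 * d⁄dX R (G.subst Q) = c * (theta G).subst Q := by
  rw [derivative_subst (HasSubst.of_constantCoeff_zero' hQ), subst_theta hQ]
  linear_combination (d⁄dX R G).subst Q * hPQ

theorem sturmLiouville_mul_subst_theta [IsDomain R] {P P1 y Q c g G : R⟦X⟧} (hP : P ≠ 0)
    (hy0 : y ≠ 0) (hy : sturmLiouville P P1 y = 0) (hQ : constantCoeff Q = 0)
    (hc : d⁄dX R c = 0) (hPQ : P * y ^ 2 * d⁄dX R Q = c * Q)
    (hG : (theta (theta (theta G))).subst Q = P * g * y ^ 4) :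
    sturmLiouville P P1 (y * (theta G).subst Q) = c ^ 2 * g * y := by
  have h1 := mul_sturmLiouville_mul hy ((theta G).subst Q)
  rw [mul_sq_mul_derivative_subst hQ hPQ, Derivation.leibniz, hc, smul_zero, add_zero,
    smul_eq_mul] at h1
  apply mul_left_cancel₀ (mul_ne_zero hP (pow_ne_zero 3 hy0))
  linear_combination (P * y ^ 2) * h1 + c * mul_sq_mul_derivative_subst hQ hPQ (theta (theta G))
    + c ^ 2 * hG

end Uniformizer

section AccessoryParameters

variable {n : ℕ} (α : Fin (n - 2) → ℂ)

theorem kappa_ne_zero (hα0 : ∀ j, α j ≠ 0) : kappa n α ≠ 0 :=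
  mul_ne_zero (pow_ne_zero _ (neg_ne_zero.mpr one_ne_zero))
    (Finset.prod_ne_zero_iff.mpr fun j _ => hα0 j)

theorem constantCoeff_PhatPoly :
    constantCoeff (PhatPoly n α) = MvPolynomial.C (kappa n α) := by
  simp only [PhatPoly, kappa, map_prod, map_sub, constantCoeff_X, constantCoeff_C, zero_sub,
    map_mul, map_pow, map_neg, map_one, Finset.prod_neg, Finset.card_univ, Fintype.card_fin]

theorem constantCoeff_Ppoly : constantCoeff (Ppoly n α) = 0 := by
  rw [Ppoly, map_mul, constantCoeff_X, zero_mul]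

theorem coeff_one_Ppoly : coeff 1 (Ppoly n α) = MvPolynomial.C (kappa n α) := by
  rw [Ppoly, ← zero_add 1, coeff_succ_X_mul, coeff_zero_eq_constantCoeff_apply, ← PhatPoly,
    constantCoeff_PhatPoly]

theorem coeff_one_Ppoly_ne_zero (hα0 : ∀ j, α j ≠ 0) : coeff 1 (Ppoly n α) ≠ 0 := by
  rw [coeff_one_Ppoly, Ne, MvPolynomial.C_eq_zero]
  exact kappa_ne_zero α hα0

theorem Ppoly_ne_zero (hα0 : ∀ j, α j ≠ 0) : Ppoly n α ≠ 0 :=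
  ne_of_apply_ne (coeff 1) (by simpa using coeff_one_Ppoly_ne_zero α hα0)

theorem Lop_pd {y : (AccRing n)⟦X⟧} (hy : Lop n α y = 0) (i : Fin (n - 3)) :
    Lop n α (pd i y) = X ^ (i : ℕ) * y := by
  have h := pd_Lop i α y
  rw [hy, pd_zero] at h
  linear_combination -h

end AccessoryParameters

theorem stmt8_general (n : ℕ) (α : Fin (n - 2) → ℂ)
    (hα0 : ∀ j, α j ≠ 0)
    (y b yinv Q : PowerSeries (AccRing n))
    (hy1 : constantCoeff (R := AccRing n) y = 1) (hy : Lop n α y = 0)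
    (hb0 : constantCoeff (R := AccRing n) b = 0)
    (hb : Lop n α b + 2 * PhatPoly n α * derivative (AccRing n) y
        + derivative (AccRing n) (PhatPoly n α) * y = 0)
    (hyinv : y * yinv = 1)
    (hQ : Q = X * expS (b * yinv))
    (i : Fin (n - 3)) (H : PowerSeries (AccRing n))
    (hH0 : constantCoeff (R := AccRing n) H = 0)
    (hH : substS Q H = Ppoly n α * X ^ (i : ℕ) * y ^ 4) :
    C (R := AccRing n) (MvPolynomial.C (kappa n α)) ^ 2 * pd i y
      = y * substS Q (theta (eich H)) := by
  have hQ0 : constantCoeff Q = 0 := by rw [hQ, map_mul, constantCoeff_X, zero_mul]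
  rw [substS_eq_subst hQ0] at hH ⊢
  have hW := wronskian_eq_C (Ph := PhatPoly n α) hy hb hy1
  rw [constantCoeff_PhatPoly] at hW
  have hPQ : Ppoly n α * y ^ 2 * d⁄dX _ Q = C (MvPolynomial.C (kappa n α)) * Q :=
    hQ ▸ X_mul_mul_sq_mul_derivative_X_mul_expS hyinv hb0 hW
  have hy0 : y ≠ 0 := fun h => by simp [h] at hy1
  have hu := sturmLiouville_mul_subst_theta (Ppoly_ne_zero α hα0) hy0 hy hQ0 derivative_C hPQ
    (G := eich H) (g := X ^ (i : ℕ)) (by rw [theta_theta_theta_eich hH0, hH])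
  refine sub_eq_zero.mp (eq_zero_of_sturmLiouville_eq_zero (P1 := P1poly n)
    (constantCoeff_Ppoly α) (coeff_one_Ppoly_ne_zero α hα0) ?_ ?_)
  · rw [sturmLiouville_mul_sub (by rw [← map_pow, derivative_C]), hu,
      ← Lop_eq_sturmLiouville, Lop_pd α hy]
    ring
  · rw [map_sub, map_mul, constantCoeff_pd, hy1, MvPolynomial.pderiv_one, mul_zero, map_mul,
      subst_theta hQ0, map_mul, hQ0, zero_mul, mul_zero, sub_zero]

/-- `κ²·∂_i y = y·((θH̃_i) ∘ Q)`. -/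
theorem stmt8 (n : ℕ) (hn : 4 ≤ n) (α : Fin (n - 2) → ℂ)
    (hα0 : ∀ j, α j ≠ 0) (hαinj : Function.Injective α)
    (y b yinv Q : PowerSeries (AccRing n))
    (hy1 : constantCoeff (R := AccRing n) y = 1) (hy : Lop n α y = 0)
    (hb0 : constantCoeff (R := AccRing n) b = 0)
    (hb : Lop n α b + 2 * PhatPoly n α * derivative (AccRing n) y
        + derivative (AccRing n) (PhatPoly n α) * y = 0)
    (hyinv : y * yinv = 1)
    (hQ : Q = X * expS (b * yinv))
    (i : Fin (n - 3)) (H : PowerSeries (AccRing n))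
    (hH0 : constantCoeff (R := AccRing n) H = 0)
    (hH : substS Q H = Ppoly n α * X ^ (i : ℕ) * y ^ 4) :
    C (R := AccRing n) (MvPolynomial.C (kappa n α)) ^ 2 * pd i y
      = y * substS Q (theta (eich H)) :=
  stmt8_general n α hα0 y b yinv Q hy1 hy hb0 hb hyinv hQ i H hH0 hH
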